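/- arXiv:2201.04330 — 8 statements merged into one kernel-verified Lean document; each statement's English description precedes it below -/
import Mathlib

section
/- If H is a G-free k-critical graph (i.e., χ_G(H) = k and every proper subgraph H' of H satisfies χ_G(H') ≤ k−1), then the minimum degree of H satisfies δ(H) ≥ δ(G)·(k−1). -/
open SimpleGraph

/-- `H` contains a copy of `G`: an injective map preserving adjacency. -/
def ContainsCopy {α β : Type*} (G : SimpleGraph α) (H : SimpleGraph β) : Prop :=
  ∃ f : α ↪ β, ∀ a b, G.Adj a b → H.Adj (f a) (f b)

/-- `H` is `G`-free. -/
def GFree {α β : Type*} (G : SimpleGraph α) (H : SimpleGraph β) : Prop :=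
  ¬ ContainsCopy G H

/-- The `G`-free chromatic number of `H`. -/
noncomputable def gChrom {α β : Type*} (G : SimpleGraph α) (H : SimpleGraph β) : ℕ :=
  sInf {k | ∃ c : β → Fin k, ∀ i, GFree G (H.induce {v | c v = i})}

/-- `H` is `G`-free `k`-critical. -/
def GFreeCritical {α β : Type*} (G : SimpleGraph α) (H : SimpleGraph β) (k : ℕ) : Prop :=
  gChrom G H = k ∧ ∀ F : H.Subgraph, F ≠ ⊤ → gChrom G F.coe ≤ k - 1

/-!
Let `v` be a vertex of minimum degree of `H` and suppose `deg v < δ(G) (k - 1)`. By criticality,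
`H - v` has a `G`-free `(k - 1)`-colouring, and by pigeonhole some colour class `i₀` contains fewer
than `δ(G)` neighbours of `v`. Give `v` the colour `i₀`: a copy of `G` inside class `i₀` cannot
pass through `v`, since every vertex of a copy of `G` has at least `δ(G)` neighbours in it, so it
lies in `H - v`, which is impossible. Hence `H` is `G`-free `(k - 1)`-colourable, contradicting
`χ_G(H) = k`.
-/

open Finset

namespace SimpleGraph

variable {α β γ : Type*} {G : SimpleGraph α} {H : SimpleGraph β}

lemma containsCopy_iff_isContained : ContainsCopy G H ↔ G ⊑ H := by
  rw [isContained_iff_exists_le_comap]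
  rfl

lemma gFree_iff_free : GFree G H ↔ G.Free H :=
  containsCopy_iff_isContained.not

def Copy.codRestrict {B : SimpleGraph γ} (f : Copy H B) {s : Set γ} (hf : ∀ b, f b ∈ s) :
    Copy H (B.induce s) :=
  ⟨⟨fun b ↦ ⟨f b, hf b⟩, f.toHom.map_adj⟩, fun _ _ h ↦ f.injective (congrArg Subtype.val h)⟩

lemma Copy.apply_ne_of_degree_lt [Fintype α] [DecidableRel G.Adj] (f : Copy G H) {w : β}
    [Fintype (H.neighborSet w)] (hw : H.degree w < G.minDegree) (a : α) : f a ≠ w := by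
  rintro rfl
  have := f.degree_le a
  have := G.minDegree_le_degree a
  omega

lemma degree_induce_eq_card_filter [Fintype β] [DecidableRel H.Adj] {s : Set β}
    [DecidablePred (· ∈ s)] {w : β} (hw : w ∈ s) :
    (H.induce s).degree ⟨w, hw⟩ = #{u ∈ H.neighborFinset w | u ∈ s} := by
  rw [← card_neighborFinset_eq_degree, ← card_map (Function.Embedding.subtype _)]
  congr 1
  ext u
  simp [and_comm]

lemma free_induce_of_free_induce_sdiff_singleton [Fintype α] [DecidableRel G.Adj] [Fintype β]
    [DecidableRel H.Adj] {s : Set β} [DecidablePred (· ∈ s)] {w : β} (hws : w ∈ s)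
    (hs : G.Free (H.induce (s \ {w}))) (hw : #{u ∈ H.neighborFinset w | u ∈ s} < G.minDegree) :
    G.Free (H.induce s) := by
  rintro ⟨f⟩
  rw [← degree_induce_eq_card_filter hws] at hw
  refine hs ⟨((Copy.induce H s).comp f).codRestrict fun a ↦ ⟨(f a).2, fun h ↦ ?_⟩⟩
  exact f.apply_ne_of_degree_lt hw a (Subtype.ext h)

def IsFreeColoring (G : SimpleGraph α) (H : SimpleGraph β) {n : ℕ} (c : β → Fin n) : Prop :=
  ∀ i, G.Free (H.induce {v | c v = i})

def FreeColorable (G : SimpleGraph α) (H : SimpleGraph β) (n : ℕ) : Prop :=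
  ∃ c : β → Fin n, G.IsFreeColoring H c

lemma gChrom_eq_sInf : gChrom G H = sInf {n | G.FreeColorable H n} := by
  simp only [gChrom, FreeColorable, IsFreeColoring, gFree_iff_free]

variable {n : ℕ}

lemma FreeColorable.gChrom_le (h : G.FreeColorable H n) : gChrom G H ≤ n :=
  gChrom_eq_sInf ▸ Nat.sInf_le h

lemma FreeColorable.freeColorable_gChrom (h : G.FreeColorable H n) :
    G.FreeColorable H (gChrom G H) := by
  rw [gChrom_eq_sInf]
  exact Nat.sInf_mem (s := {n | G.FreeColorable H n}) ⟨n, h⟩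

lemma freeColorable_gChrom_of_pos (h : 0 < gChrom G H) : G.FreeColorable H (gChrom G H) := by
  rw [gChrom_eq_sInf] at h ⊢
  exact Nat.sInf_mem (Nat.nonempty_of_pos_sInf h)

lemma FreeColorable.mono [Nonempty α] {m : ℕ} (h : G.FreeColorable H m) (hmn : m ≤ n) :
    G.FreeColorable H n := by
  obtain ⟨c, hc⟩ := h
  refine ⟨Fin.castLE hmn ∘ c, fun i ⟨f⟩ ↦ ?_⟩
  obtain ⟨j, rfl⟩ : ∃ j, Fin.castLE hmn j = i := ⟨_, (f (Classical.arbitrary α)).2⟩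
  have hclass : {v | Fin.castLE hmn (c v) = Fin.castLE hmn j} = {v | c v = j} :=
    Set.ext fun v ↦ (Fin.castLE_injective hmn).eq_iff
  exact hc j (hclass ▸ ⟨f⟩)

lemma FreeColorable.of_copy {B : SimpleGraph γ} (f : Copy H B) (h : G.FreeColorable B n) :
    G.FreeColorable H n := by
  obtain ⟨c, hc⟩ := h
  refine ⟨c ∘ f, fun i ⟨g⟩ ↦ hc i ⟨(f.comp ((Copy.induce H _).comp g)).codRestrict fun a ↦ ?_⟩⟩
  exact (g a).2

lemma FreeColorable.of_induce_compl_singleton [Fintype α] [DecidableRel G.Adj] [Fintype β]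
    [DecidableRel H.Adj] {v : β} (hv : H.degree v < G.minDegree * n)
    (h : G.FreeColorable (H.induce {v}ᶜ) n) : G.FreeColorable H n := by
  classical
  obtain ⟨c, hc⟩ := h
  have hn : 0 < n := Nat.pos_of_ne_zero (by rintro rfl; simp at hv)
  -- `e v` is arbitrary: it is overwritten in `c'`
  let e : β → Fin n := fun u ↦ if hu : u = v then ⟨0, hn⟩ else c ⟨u, hu⟩
  obtain ⟨i₀, -, hi₀⟩ := exists_card_fiber_lt_of_card_lt_mul (s := H.neighborFinset v)
    (t := univ) (f := e) (by simpa [mul_comm] using hv)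
  let c' := Function.update e v i₀
  have hsdiff : ∀ i, G.Free (H.induce ({u | c' u = i} \ {v})) := by
    rintro i ⟨f⟩
    let f' := ((Copy.induce H _).comp f).codRestrict (s := {v}ᶜ) fun a ↦ (f a).2.2
    refine hc i ⟨f'.codRestrict fun a ↦ ?_⟩
    obtain ⟨hfi, hfv : (f a : β) ≠ v⟩ := (f a).2
    change c ⟨f a, hfv⟩ = i
    simpa [c', e, Function.update_of_ne hfv, hfv] using hfi
  refine ⟨c', fun i ↦ ?_⟩
  obtain rfl | hi := eq_or_ne i₀ i
  · refine free_induce_of_free_induce_sdiff_singleton (w := v) (by simp [c']) (hsdiff _) ?_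
    convert hi₀ using 2
    refine filter_congr fun u hu ↦ ?_
    simp [c', Function.update_of_ne (H.ne_of_adj ((H.mem_neighborFinset v u).1 hu)).symm]
  · have hvi : v ∉ {u | c' u = i} := by simp [c', hi]
    have := hsdiff i
    rwa [Set.sdiff_singleton_eq_self hvi] at this

end SimpleGraph

theorem stmt0 {α β : Type*} [Fintype α] [Fintype β] [Nonempty α] [Nonempty β]
    (G : SimpleGraph α) (H : SimpleGraph β) [DecidableRel G.Adj] [DecidableRel H.Adj]
    (k : ℕ) (h : GFreeCritical G H k) :
    G.minDegree * (k - 1) ≤ H.minDegree := by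
  obtain ⟨hk, hcrit⟩ := h
  obtain hk1 | hk2 := Nat.lt_or_ge k 2
  · simp [Nat.sub_eq_zero_of_le (Nat.le_of_lt_succ hk1)]
  by_contra! hlt
  obtain ⟨v, hv⟩ := H.exists_minimal_degree_vertex
  have hH : G.FreeColorable H k := hk ▸ freeColorable_gChrom_of_pos (by omega)
  let F := (⊤ : H.Subgraph).induce {v}ᶜ
  have hF : F ≠ ⊤ := fun hF ↦ by simpa [F] using congrArg (v ∈ ·.verts) hF
  have hFcol : G.FreeColorable F.coe (k - 1) :=
    (hH.of_copy F.coeCopy).freeColorable_gChrom.mono (hcrit F hF)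
  rw [← induce_eq_coe_induce_top] at hFcol
  have := (hFcol.of_induce_compl_singleton (hv ▸ hlt)).gChrom_le
  omega
end

section
/- For any graphs G and H with maximum degrees Δ(G) and Δ(H), we have χ_G(H) ≤ ⌈(Δ(H)+1)/Δ(G)⌉. -/
open SimpleGraph

/-! Colour `H` with `k = ⌈(Δ(H) + 1) / Δ(G)⌉` colours so as to minimise the number of
monochromatic edges. If some vertex `v` had at least `Δ(G)` neighbours of its own colour, then,
as `deg v < k Δ(G)`, some colour would occur fewer than `Δ(G)` times around `v`, and recolouring
`v` with it would remove monochromatic edges. So every colour class induces a graph of maximum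
degree below `Δ(G)`, which cannot contain a copy of `G`. -/

namespace SimpleGraph

open Finset

section Recoloring

variable {β ι : Type*} [Fintype β] (H : SimpleGraph β) [DecidableRel H.Adj]
  [DecidableEq ι]

def colorDegree (c : β → ι) (v : β) (j : ι) : ℕ := #{w ∈ H.neighborFinset v | c w = j}

def monochromaticPairs (c : β → ι) : Finset (β × β) := {p | H.Adj p.1 p.2 ∧ c p.1 = c p.2}

theorem sum_colorDegree [Fintype ι] (c : β → ι) (v : β) :
    ∑ j, H.colorDegree c v j = H.degree v :=
  (card_eq_sum_card_fiberwise fun w _ => mem_univ (c w)).symm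

section Update

variable [DecidableEq β]

theorem colorDegree_update_self (c : β → ι) (v : β) (j j' : ι) :
    H.colorDegree (Function.update c v j) v j' = H.colorDegree c v j' := by
  refine congrArg card (filter_congr fun w hw => ?_)
  rw [Function.update_of_ne (H.ne_of_adj ((H.mem_neighborFinset v w).1 hw)).symm]

/-- Every monochromatic pair either avoids `v` or is `(v, w)` or `(w, v)` with `w` a neighbour of
`v` of the same colour. -/
theorem card_monochromaticPairs (c : β → ι) (v : β) :
    #(H.monochromaticPairs c) =
      #{p ∈ H.monochromaticPairs c | p.1 ≠ v ∧ p.2 ≠ v} + 2 * H.colorDegree c v (c v) := by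
  set N := {w ∈ H.neighborFinset v | c w = c v}
  have htouching : {p ∈ H.monochromaticPairs c | ¬(p.1 ≠ v ∧ p.2 ≠ v)} =
      N.map ⟨(v, ·), Prod.mk_right_injective v⟩ ∪ N.map ⟨(·, v), Prod.mk_left_injective v⟩ := by
    ext ⟨x, y⟩
    simp only [monochromaticPairs, N, mem_filter, mem_univ, true_and, mem_union, mem_map,
      Function.Embedding.coeFn_mk, mem_neighborFinset, Prod.mk.injEq]
    constructor
    · rintro ⟨⟨hadj, hc⟩, hv⟩
      obtain rfl | rfl : x = v ∨ y = v := by tauto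
      · exact Or.inl ⟨y, ⟨hadj, hc.symm⟩, rfl, rfl⟩
      · exact Or.inr ⟨x, ⟨hadj.symm, hc⟩, rfl, rfl⟩
    · rintro (⟨w, ⟨hadj, hc⟩, rfl, rfl⟩ | ⟨w, ⟨hadj, hc⟩, rfl, rfl⟩)
      · exact ⟨⟨hadj, hc.symm⟩, by simp⟩
      · exact ⟨⟨hadj.symm, hc⟩, by simp⟩
  have hdisj : Disjoint (N.map ⟨(v, ·), Prod.mk_right_injective v⟩)
      (N.map ⟨(·, v), Prod.mk_left_injective v⟩) := by
    refine Finset.disjoint_left.2 fun p hp hq => ?_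
    obtain ⟨w, hw, rfl⟩ := mem_map.1 hp
    obtain ⟨u, hu, huv⟩ := mem_map.1 hq
    obtain ⟨rfl, rfl⟩ := Prod.mk.inj huv
    exact H.irrefl ((H.mem_neighborFinset _ _).1 (mem_filter.1 hu).1)
  rw [← card_filter_add_card_filter_not (s := H.monochromaticPairs c)
      (fun p : β × β => p.1 ≠ v ∧ p.2 ≠ v),
    htouching, card_union_of_disjoint hdisj, card_map, card_map, colorDegree, two_mul]

theorem filter_monochromaticPairs_update (c : β → ι) (v : β) (j : ι) :
    {p ∈ H.monochromaticPairs (Function.update c v j) | p.1 ≠ v ∧ p.2 ≠ v} =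
      {p ∈ H.monochromaticPairs c | p.1 ≠ v ∧ p.2 ≠ v} := by
  ext p
  simp only [monochromaticPairs, mem_filter, mem_univ, true_and, and_congr_left_iff]
  rintro ⟨h1, h2⟩
  rw [Function.update_of_ne h1, Function.update_of_ne h2]

theorem card_monochromaticPairs_update (c : β → ι) (v : β) (j : ι) :
    #(H.monochromaticPairs (Function.update c v j)) + 2 * H.colorDegree c v (c v) =
      #(H.monochromaticPairs c) + 2 * H.colorDegree c v j := by
  rw [card_monochromaticPairs H _ v, card_monochromaticPairs H c v,
    filter_monochromaticPairs_update, colorDegree_update_self, Function.update_self]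
  ring

end Update

theorem exists_colorDegree_lt [Fintype ι] {d : ℕ}
    (hk : H.maxDegree + 1 ≤ Fintype.card ι * d) :
    ∃ c : β → ι, ∀ v, H.colorDegree c v (c v) < d := by
  classical
  have : Nonempty ι := Fintype.card_pos_iff.1 <| Nat.pos_of_ne_zero fun h0 => by simp [h0] at hk
  obtain ⟨c, -, hmin⟩ := exists_min_image univ (fun c : β → ι => #(H.monochromaticPairs c))
    univ_nonempty
  refine ⟨c, fun v => ?_⟩
  by_contra! h
  have hall : ∀ j, d ≤ H.colorDegree c v j := fun j => by
    have := H.card_monochromaticPairs_update c v j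
    have := hmin (Function.update c v j) (mem_univ _)
    omega
  have : Fintype.card ι * d ≤ H.degree v := by
    simpa [← H.sum_colorDegree c v] using sum_le_sum fun j (_ : j ∈ univ) => hall j
  have := H.degree_le_maxDegree v
  omega

end Recoloring

end SimpleGraph

open Finset in
theorem ContainsCopy.exists_maxDegree_le_colorDegree {α β ι : Type*} [Fintype α] [Nonempty α]
    [Fintype β] [DecidableEq ι] {G : SimpleGraph α} [DecidableRel G.Adj]
    {H : SimpleGraph β} [DecidableRel H.Adj] {c : β → ι} {i : ι}
    (h : ContainsCopy G (H.induce {v | c v = i})) :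
    ∃ v, G.maxDegree ≤ H.colorDegree c v (c v) := by
  obtain ⟨f, hf⟩ := h
  obtain ⟨a, ha⟩ := G.exists_maximal_degree_vertex
  refine ⟨f a, ha ▸ ?_⟩
  rw [← card_neighborFinset_eq_degree, colorDegree, (f a).2]
  refine card_le_card_of_injOn (fun b => (f b).1) (fun b hb => ?_)
    (fun x _ y _ hxy => f.injective (Subtype.ext hxy))
  simp only [mem_coe, coe_filter, mem_neighborFinset, Set.mem_ofPred_eq] at hb ⊢
  exact ⟨hf a b hb, (f b).2⟩

theorem stmt2 {α β : Type*} [Fintype α] [Fintype β]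
    (G : SimpleGraph α) (H : SimpleGraph β) [DecidableRel G.Adj] [DecidableRel H.Adj]
    (hG : 1 ≤ G.maxDegree) :
    gChrom G H ≤ ⌈((H.maxDegree + 1 : ℚ) / (G.maxDegree : ℚ))⌉₊ := by
  classical
  set k := ⌈((H.maxDegree + 1 : ℚ) / (G.maxDegree : ℚ))⌉₊
  have : Nonempty α := by
    by_contra! hα
    simp at hG
  have hk : H.maxDegree + 1 ≤ Fintype.card (Fin k) * G.maxDegree := by
    rw [Fintype.card_fin, ← Nat.cast_le (α := ℚ)]
    push_cast
    rw [← div_le_iff₀ (by exact_mod_cast hG)]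
    exact Nat.le_ceil _
  obtain ⟨c, hc⟩ := H.exists_colorDegree_lt hk
  refine Nat.sInf_le ⟨c, fun i hcopy => ?_⟩
  obtain ⟨v, hv⟩ := hcopy.exists_maxDegree_le_colorDegree
  exact (hc v).not_ge hv
end

section
/- For any graphs G and H with χ(G) ≥ 2, we have χ_G(H) ≤ ⌈χ(H)/(χ(G)−1)⌉. -/
/-!
Colour `H` properly with `k * d` colours, `d = χ(G) - 1`, and read each colour as a pair
`(i, j) ∈ Fin k × Fin d`. The vertices with first coordinate `i` induce a subgraph properly
coloured by the second coordinate, hence `d`-colourable; a copy of `G` inside it would make `G`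
`d`-colourable. So these `k` classes are `G`-free, and `k = ⌈χ(H) / d⌉` colours suffice.
-/

open SimpleGraph

theorem ContainsCopy.colorable {α β : Type*} {G : SimpleGraph α} {H : SimpleGraph β}
    (hGH : ContainsCopy G H) {d : ℕ} (hH : H.Colorable d) : G.Colorable d := by
  obtain ⟨f, hf⟩ := hGH
  exact hH.of_hom ⟨f, hf _ _⟩

theorem gFree_of_colorable {α β : Type*} {G : SimpleGraph α} {H : SimpleGraph β} {d : ℕ}
    (hG : ¬ G.Colorable d) (hH : H.Colorable d) : GFree G H :=
  fun hGH => hG (hGH.colorable hH)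

theorem gChrom_le_of_colorable_mul {α β : Type*} {G : SimpleGraph α} {H : SimpleGraph β}
    {k d : ℕ} (hG : ¬ G.Colorable d) (hH : H.Colorable (k * d)) : gChrom G H ≤ k := by
  obtain ⟨c⟩ := hH
  let pair : β → Fin k × Fin d := fun v => finProdFinEquiv.symm (c v)
  refine Nat.sInf_le ⟨fun v => (pair v).1, fun i => gFree_of_colorable hG ⟨?_⟩⟩
  refine Coloring.mk (fun v => (pair v).2) fun {u v} huv hcol => c.valid huv ?_
  have hfst : (pair u).1 = (pair v).1 := u.2.trans v.2.symm
  exact finProdFinEquiv.symm.injective (Prod.ext hfst hcol)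

theorem Nat.le_ceil_div_mul {K : Type*} [Field K] [LinearOrder K] [IsStrictOrderedRing K]
    [FloorSemiring K] (n : ℕ) {d : ℕ} (hd : 0 < d) : n ≤ ⌈(n : K) / d⌉₊ * d := by
  have hd' : (0 : K) < d := by exact_mod_cast hd
  exact_mod_cast (div_le_iff₀ hd').mp (Nat.le_ceil ((n : K) / d))

theorem stmt4_general {α β : Type*}
    (G : SimpleGraph α) (H : SimpleGraph β) (m n : ℕ)
    (hG : G.chromaticNumber = m) (hH : H.chromaticNumber = n) (hm : 2 ≤ m) :
    gChrom G H ≤ ⌈((n : ℚ) / ((m : ℚ) - 1))⌉₊ := by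
  have hG_not : ¬ G.Colorable (m - 1) := fun hcol => by
    have := hcol.chromaticNumber_le
    rw [hG, Nat.cast_le] at this
    omega
  have hH_col : H.Colorable n := by rw [← chromaticNumber_le_iff_colorable, hH]
  have hcast : (m : ℚ) - 1 = ((m - 1 : ℕ) : ℚ) := by
    rw [Nat.cast_sub (by omega), Nat.cast_one]
  rw [hcast]
  exact gChrom_le_of_colorable_mul hG_not (hH_col.mono (Nat.le_ceil_div_mul n (by omega)))

theorem stmt4 {α β : Type*} [Fintype α] [Fintype β]
    (G : SimpleGraph α) (H : SimpleGraph β) (m n : ℕ)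
    (hG : G.chromaticNumber = m) (hH : H.chromaticNumber = n) (hm : 2 ≤ m) :
    gChrom G H ≤ ⌈((n : ℚ) / ((m : ℚ) - 1))⌉₊ :=
  stmt4_general G H m n hG hH hm
end

section
/- Let d ≥ 3, k ≥ 3, G = K_{d+1}, and let H = K_{(k-1)d} + (d+1)K_1 be the join of K_{(k-1)d} with (d+1) isolated vertices, on (k-1)d + d + 1 = kd+1 vertices. Then χ_G(H) = k, χ_G(complement of H) = 2, and hence χ_G(H) + χ_G(complement of H) = k + 2 = ⌈(kd+1)/d⌉ + 1. -/
open SimpleGraph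

/-- The join of a clique on `a` vertices with `b` isolated vertices. -/
def cliqueJoinEmpty (a b : ℕ) : SimpleGraph (Fin a ⊕ Fin b) :=
  SimpleGraph.fromRel (fun x y => x.isLeft ∨ y.isLeft)


lemma adj_cje {a b : ℕ} {x y : Fin a ⊕ Fin b} :
    (cliqueJoinEmpty a b).Adj x y ↔ x ≠ y ∧ (x.isLeft ∨ y.isLeft) := by
  rw [cliqueJoinEmpty, SimpleGraph.fromRel_adj]; tauto

lemma adj_cje_compl {a b : ℕ} {x y : Fin a ⊕ Fin b} :
    (cliqueJoinEmpty a b)ᶜ.Adj x y ↔ x ≠ y ∧ x.isLeft = false ∧ y.isLeft = false := by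
  rw [SimpleGraph.compl_adj, adj_cje]
  constructor
  · rintro ⟨h1, h2⟩
    refine ⟨h1, ?_, ?_⟩ <;> [cases hx : x.isLeft; cases hy : y.isLeft] <;> simp_all
  · rintro ⟨h1, h2, h3⟩
    exact ⟨h1, by simp [h2, h3, h1]⟩

lemma copy_of_embed {β : Type*} (Hg : SimpleGraph β) {m : ℕ} (s : Set β)
    (g : Fin m → β) (hinj : Function.Injective g) (hmem : ∀ a, g a ∈ s)
    (hadj : ∀ a b, a ≠ b → Hg.Adj (g a) (g b)) :
    ContainsCopy (completeGraph (Fin m)) (Hg.induce s) := by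
  refine ⟨⟨fun a => ⟨g a, hmem a⟩, fun a b h => hinj (congrArg Subtype.val h)⟩, ?_⟩
  intro a b hab; exact hadj a b hab

lemma copy_of_finset {β : Type*} [DecidableEq β] (Hg : SimpleGraph β) {m : ℕ} (s : Set β)
    (S : Finset β) (hcard : S.card = m) (hmem : ∀ v ∈ S, v ∈ s)
    (hadj : ∀ v ∈ S, ∀ u ∈ S, v ≠ u → Hg.Adj v u) :
    ContainsCopy (completeGraph (Fin m)) (Hg.induce s) := by
  let e := (S.equivFinOfCardEq hcard).symm
  apply copy_of_embed Hg s (fun a => (e a : β))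
  · intro a b h; exact e.injective (Subtype.ext h)
  · intro a; exact hmem _ (e a).2
  · intro a b hab
    exact hadj _ (e a).2 _ (e b).2 (fun h => hab (e.injective (Subtype.ext h)))

lemma free_of_small {β : Type*} (Hg : SimpleGraph β) {m n : ℕ} (s : Set β)
    (φ : β → Fin n) (hφ : ∀ x y, x ∈ s → y ∈ s → φ x = φ y → x = y) (h : n < m) :
    GFree (completeGraph (Fin m)) (Hg.induce s) := by
  rintro ⟨f, hf⟩
  have hinj : Function.Injective (fun a : Fin m => φ (f a).val) := by
    intro a b hab
    exact f.injective (Subtype.ext (hφ _ _ (f a).prop (f b).prop hab))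
  have := Fintype.card_le_of_injective _ hinj
  simp only [Fintype.card_fin] at this
  omega

lemma gChrom_eq {α β : Type*} (G : SimpleGraph α) (Hg : SimpleGraph β) (n : ℕ)
    (hmem : ∃ c : β → Fin n, ∀ i, GFree G (Hg.induce {v | c v = i}))
    (hlow : ∀ m, m < n → ∀ c : β → Fin m, ¬ ∀ i, GFree G (Hg.induce {v | c v = i})) :
    gChrom G Hg = n := by
  apply le_antisymm (Nat.sInf_le hmem)
  apply le_csInf ⟨n, hmem⟩
  rintro m ⟨c, hc⟩
  by_contra hlt
  exact hlow m (by omega) c hc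

lemma upperH (d k : ℕ) (hd : 3 ≤ d) (hk : 3 ≤ k) :
    ∃ c : (Fin ((k-1)*d) ⊕ Fin (d+1)) → Fin k, ∀ i, GFree (completeGraph (Fin (d+1)))
      ((cliqueJoinEmpty ((k-1)*d) (d+1)).induce {v | c v = i}) := by
  have hd0 : 0 < d := by omega
  have hdiv : ∀ w : Fin ((k-1)*d), w.val / d < k - 1 := by
    intro w
    apply Nat.div_lt_of_lt_mul
    calc w.val < (k - 1) * d := w.isLt
      _ = d * (k - 1) := mul_comm _ _
  refine ⟨Sum.elim (fun w => ⟨w.val / d, by have := hdiv w; omega⟩) (fun _ => ⟨k - 1, by omega⟩), ?_⟩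
  intro i
  by_cases hi : i.val < k - 1
  · apply free_of_small _ _
      (Sum.elim (fun w : Fin ((k-1)*d) => (⟨w.val % d, Nat.mod_lt _ hd0⟩ : Fin d))
        (fun _ => ⟨0, hd0⟩)) ?_ (by omega)
    rintro (x|x) (y|y) hx hy hxy
    · have hx' : x.val / d = i.val := congrArg Fin.val hx
      have hy' : y.val / d = i.val := congrArg Fin.val hy
      have hxy' : x.val % d = y.val % d := congrArg Fin.val hxy
      have e1 := Nat.div_add_mod x.val d
      have e2 := Nat.div_add_mod y.val d
      rw [hx'] at e1
      rw [hy'] at e2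
      exact congrArg Sum.inl (Fin.ext (by omega))
    · have : k - 1 = i.val := congrArg Fin.val hy; omega
    · have : k - 1 = i.val := congrArg Fin.val hx; omega
    · have : k - 1 = i.val := congrArg Fin.val hx; omega
  · rintro ⟨f, hf⟩
    have hright : ∀ a : Fin (d+1),
        Sum.isLeft ((f a : {v : Fin ((k-1)*d) ⊕ Fin (d+1) // _}) : Fin ((k-1)*d) ⊕ Fin (d+1))
          = true → False := by
      intro a ha
      have hv := (f a).2
      rcases hval : ((f a : {v : Fin ((k-1)*d) ⊕ Fin (d+1) // _}) : Fin ((k-1)*d) ⊕ Fin (d+1))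
        with w | w
      · rw [hval] at hv
        have h1 : w.val / d = i.val := congrArg Fin.val hv
        have := hdiv w
        omega
      · rw [hval] at ha
        simp at ha
    have h01 : (completeGraph (Fin (d+1))).Adj ⟨0, by omega⟩ ⟨1, by omega⟩ := by
      simp [completeGraph, top_adj, Fin.ext_iff]
    have hadj := hf _ _ h01
    rw [SimpleGraph.comap_adj, adj_cje] at hadj
    rcases hadj.2 with h | h
    · exact hright _ h
    · exact hright _ h

lemma lowerH (d k : ℕ) (hd : 3 ≤ d) (hk : 3 ≤ k) (m : ℕ) (hm : m < k)
    (c : (Fin ((k-1)*d) ⊕ Fin (d+1)) → Fin m) :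
    ¬ ∀ i, GFree (completeGraph (Fin (d+1)))
      ((cliqueJoinEmpty ((k-1)*d) (d+1)).induce {v | c v = i}) := by
  intro hc
  classical
  set A : Fin m → Finset (Fin ((k-1)*d)) :=
    fun i => Finset.univ.filter (fun w => c (Sum.inl w) = i) with hA
  set B : Fin m → Finset (Fin (d+1)) :=
    fun i => Finset.univ.filter (fun w => c (Sum.inr w) = i) with hB
  -- key bound per color class
  have key : ∀ i, (A i).card + (if (B i).Nonempty then 1 else 0) ≤ d := by
    intro i
    by_contra hcon
    push_neg at hcon
    apply hc i
    by_cases hBi : (B i).Nonempty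
    · have hAd : d ≤ (A i).card := by rw [if_pos hBi] at hcon; omega
      obtain ⟨w, hw⟩ := hBi
      obtain ⟨t, hts, htc⟩ := Finset.exists_subset_card_eq hAd
      apply copy_of_finset _ _ (t.image Sum.inl ∪ {Sum.inr w})
      · rw [Finset.card_union_of_disjoint, Finset.card_image_of_injective _ Sum.inl_injective,
          htc, Finset.card_singleton]
        simp only [Finset.disjoint_singleton_right, Finset.mem_image]
        rintro ⟨x, -, hx⟩
        exact Sum.inl_ne_inr hx
      · intro v hv
        rcases Finset.mem_union.mp hv with hv | hv
        · obtain ⟨x, hx, rfl⟩ := Finset.mem_image.mp hv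
          have := hts hx
          simp only [hA, Finset.mem_filter] at this
          exact this.2
        · rw [Finset.mem_singleton.mp hv]
          simp only [hB, Finset.mem_filter] at hw
          exact hw.2
      · intro v hv u hu hvu
        rw [adj_cje]
        refine ⟨hvu, ?_⟩
        rcases Finset.mem_union.mp hv with hv | hv
        · obtain ⟨x, -, rfl⟩ := Finset.mem_image.mp hv
          left; rfl
        · rcases Finset.mem_union.mp hu with hu | hu
          · obtain ⟨x, -, rfl⟩ := Finset.mem_image.mp hu
            right; rfl
          · exfalso
            rw [Finset.mem_singleton.mp hv, Finset.mem_singleton.mp hu] at hvu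
            exact hvu rfl
    · have hAd : d + 1 ≤ (A i).card := by rw [if_neg hBi] at hcon; omega
      obtain ⟨t, hts, htc⟩ := Finset.exists_subset_card_eq hAd
      apply copy_of_finset _ _ (t.image Sum.inl)
      · rw [Finset.card_image_of_injective _ Sum.inl_injective, htc]
      · intro v hv
        obtain ⟨x, hx, rfl⟩ := Finset.mem_image.mp hv
        have := hts hx
        simp only [hA, Finset.mem_filter] at this
        exact this.2
      · intro v hv u hu hvu
        rw [adj_cje]
        refine ⟨hvu, ?_⟩
        obtain ⟨x, -, rfl⟩ := Finset.mem_image.mp hv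
        left; rfl
  -- counting
  have sumA : ∑ i : Fin m, (A i).card = (k-1)*d := by
    have := Finset.card_eq_sum_card_fiberwise
      (f := fun w : Fin ((k-1)*d) => c (Sum.inl w)) (s := Finset.univ) (t := Finset.univ)
      (fun x _ => Finset.mem_univ _)
    simpa using this.symm
  have sumB : ∑ i : Fin m, (B i).card = d + 1 := by
    have := Finset.card_eq_sum_card_fiberwise
      (f := fun w : Fin (d+1) => c (Sum.inr w)) (s := Finset.univ) (t := Finset.univ)
      (fun x _ => Finset.mem_univ _)
    simpa using this.symm
  obtain ⟨i0, hi0⟩ : ∃ i, (B i).Nonempty := by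
    by_contra h
    push_neg at h
    have : ∑ i : Fin m, (B i).card = 0 :=
      Finset.sum_eq_zero (fun i _ => Finset.card_eq_zero.mpr (h i))
    omega
  have hsum : ∑ i : Fin m, ((A i).card + (if (B i).Nonempty then 1 else 0)) ≤ m * d := by
    calc ∑ i : Fin m, ((A i).card + (if (B i).Nonempty then 1 else 0))
        ≤ ∑ _i : Fin m, d := Finset.sum_le_sum (fun i _ => key i)
      _ = m * d := by simp [Finset.sum_const, Finset.card_univ]
  have h1 : (1:ℕ) ≤ ∑ i : Fin m, (if (B i).Nonempty then 1 else 0) := by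
    have := Finset.single_le_sum (f := fun i => if (B i).Nonempty then 1 else 0)
      (fun i _ => Nat.zero_le _) (Finset.mem_univ i0)
    simpa [hi0] using this
  rw [Finset.sum_add_distrib, sumA] at hsum
  have hle : m * d ≤ (k-1) * d := Nat.mul_le_mul_right d (by omega)
  omega

lemma upperC (d k : ℕ) (hd : 3 ≤ d) (hk : 3 ≤ k) :
    ∃ c : (Fin ((k-1)*d) ⊕ Fin (d+1)) → Fin 2, ∀ i, GFree (completeGraph (Fin (d+1)))
      ((cliqueJoinEmpty ((k-1)*d) (d+1))ᶜ.induce {v | c v = i}) := by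
  have hd0 : 0 < d := by omega
  refine ⟨Sum.elim (fun _ => 0) (fun w => if w = ⟨0, by omega⟩ then 1 else 0), ?_⟩
  intro i
  by_cases hi : i = 1
  · subst hi
    apply free_of_small _ _ (fun _ => (0 : Fin 1)) ?_ (by omega)
    rintro (x|x) (y|y) hx hy -
    · exact absurd hx (by simp)
    · exact absurd hx (by simp)
    · exact absurd hy (by simp)
    · have hx' : (if x = ⟨0, by omega⟩ then (1:Fin 2) else 0) = 1 := hx
      have hy' : (if y = ⟨0, by omega⟩ then (1:Fin 2) else 0) = 1 := hy
      rw [congrArg Sum.inr (by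
        by_contra hne
        rw [if_neg hne] at hx'
        exact absurd hx' (by decide) : x = ⟨0, by omega⟩)]
      rw [congrArg Sum.inr (by
        by_contra hne
        rw [if_neg hne] at hy'
        exact absurd hy' (by decide) : y = ⟨0, by omega⟩)]
  · have hi0 : i = 0 := by omega
    subst hi0
    rintro ⟨f, hf⟩
    -- every vertex of the copy is a right vertex different from 0
    have hall : ∀ a : Fin (d+1), ∃ w : Fin (d+1),
        ((f a : {v : Fin ((k-1)*d) ⊕ Fin (d+1) // _}) : Fin ((k-1)*d) ⊕ Fin (d+1)) = Sum.inr w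
          ∧ w ≠ ⟨0, by omega⟩ := by
      intro a
      set b : Fin (d+1) := if a = ⟨0, by omega⟩ then ⟨1, by omega⟩ else ⟨0, by omega⟩ with hb
      have hab : a ≠ b := by
        rw [hb]
        split
        · next h => rw [h]; intro hcon; exact absurd (congrArg Fin.val hcon) (by simp)
        · next h => exact h
      have hadj := hf a b (by simp [completeGraph, top_adj]; exact hab)
      rw [SimpleGraph.comap_adj, adj_cje_compl] at hadj
      rcases hval : ((f a : {v : Fin ((k-1)*d) ⊕ Fin (d+1) // _}) : Fin ((k-1)*d) ⊕ Fin (d+1))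
        with w | w
      · exfalso
        have hl : ((f a : {v : Fin ((k-1)*d) ⊕ Fin (d+1) // _}) :
            Fin ((k-1)*d) ⊕ Fin (d+1)).isLeft = false := hadj.2.1
        rw [hval] at hl
        simp at hl
      · refine ⟨w, rfl, ?_⟩
        have hv := (f a).2
        rw [hval] at hv
        have hv' : (if w = ⟨0, by omega⟩ then (1 : Fin 2) else 0) = 0 := hv
        intro hcon
        rw [if_pos hcon] at hv'
        exact absurd hv' (by decide)
    choose w hw hw0 using hall
    have hinj : Function.Injective (fun a : Fin (d+1) => (⟨(w a).val - 1, by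
        have h1 := (w a).isLt
        have h2 : (w a).val ≠ 0 := fun h => hw0 a (Fin.ext h)
        omega⟩ : Fin d)) := by
      intro a b hab
      have hab' : (w a).val - 1 = (w b).val - 1 := congrArg Fin.val hab
      have ha0 : (w a).val ≠ 0 := fun h => hw0 a (Fin.ext h)
      have hb0 : (w b).val ≠ 0 := fun h => hw0 b (Fin.ext h)
      have : w a = w b := Fin.ext (by omega)
      apply f.injective
      apply Subtype.ext
      rw [hw a, hw b, this]
    have := Fintype.card_le_of_injective _ hinj
    simp only [Fintype.card_fin] at this
    omega

lemma lowerC (d k : ℕ) (hd : 3 ≤ d) (hk : 3 ≤ k) (m : ℕ) (hm : m < 2)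
    (c : (Fin ((k-1)*d) ⊕ Fin (d+1)) → Fin m) :
    ¬ ∀ i, GFree (completeGraph (Fin (d+1)))
      ((cliqueJoinEmpty ((k-1)*d) (d+1))ᶜ.induce {v | c v = i}) := by
  intro hc
  interval_cases m
  · exact (c (Sum.inr ⟨0, by omega⟩)).elim0
  · apply hc 0
    apply copy_of_embed _ _ (fun a : Fin (d+1) => (Sum.inr a : Fin ((k-1)*d) ⊕ Fin (d+1)))
    · exact fun a b h => Sum.inr_injective h
    · intro a
      exact Subsingleton.elim _ _
    · intro a b hab
      rw [adj_cje_compl]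
      exact ⟨fun h => hab (Sum.inr_injective h), rfl, rfl⟩


theorem stmt11 (d k : ℕ) (hd : 3 ≤ d) (hk : 3 ≤ k) :
    gChrom (completeGraph (Fin (d + 1))) (cliqueJoinEmpty ((k - 1) * d) (d + 1)) = k ∧
    gChrom (completeGraph (Fin (d + 1))) (cliqueJoinEmpty ((k - 1) * d) (d + 1))ᶜ = 2 ∧
    k + 2 = ⌈(((k * d + 1 : ℕ) : ℚ) / (d : ℚ))⌉₊ + 1 := by
  refine ⟨gChrom_eq _ _ _ (upperH d k hd hk) (lowerH d k hd hk),
    gChrom_eq _ _ _ (upperC d k hd hk) (lowerC d k hd hk), ?_⟩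
  suffices h : ⌈(((k * d + 1 : ℕ) : ℚ) / (d : ℚ))⌉₊ = k + 1 by omega
  have hdq : (3:ℚ) ≤ (d:ℚ) := by exact_mod_cast hd
  rw [Nat.ceil_eq_iff (by omega)]
  constructor
  · rw [lt_div_iff₀ (by linarith)]
    push_cast
    nlinarith
  · rw [div_le_iff₀ (by linarith)]
    push_cast
    nlinarith
end

section
/- For any graph H on n vertices, χ_{K_3}(H) + χ_{K_3}(complement of H) ≤ ⌈n/2⌉ + 1. -/
open SimpleGraph

/-
Let `a` and `b` be the triangle-free chromatic numbers of `H` and `Hᶜ`, and pass to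
vertex-critical vertex sets `S` for `H` and `T` for `Hᶜ`. In a critical set of chromatic
number `a` every vertex has at least `2a - 2` neighbours: otherwise some colour class among
`a - 1` meets its neighbourhood in at most one vertex, and the vertex can join that class.
If `S` and `T` share a vertex, its degrees in `H` and in `Hᶜ` add up to at most `n - 1`,
so `2a + 2b ≤ n + 3`; otherwise `|S| ≥ 2a - 1`, `|T| ≥ 2b - 1` and `|S| + |T| ≤ n`.
Either way `a + b ≤ ⌈n/2⌉ + 1`.
-/

open Finset

namespace SimpleGraph

variable {β : Type*} (G : SimpleGraph β)

def TriangleFreeColorableOn (s : Finset β) (k : ℕ) : Prop :=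
  ∃ c : β → ℕ, (∀ v ∈ s, c v < k) ∧ ∀ x ∈ s, ∀ y ∈ s, ∀ z ∈ s,
    G.Adj x y → G.Adj x z → G.Adj y z → c x = c y → c x = c z → False

noncomputable def triangleFreeChromOn (s : Finset β) : ℕ :=
  sInf {k | G.TriangleFreeColorableOn s k}

variable {G} {s t : Finset β} {k m : ℕ}

lemma TriangleFreeColorableOn.subset (hst : s ⊆ t) (h : G.TriangleFreeColorableOn t k) :
    G.TriangleFreeColorableOn s k := by
  obtain ⟨c, hlt, hc⟩ := h
  exact ⟨c, fun v hv => hlt v (hst hv),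
    fun x hx y hy z hz => hc x (hst hx) y (hst hy) z (hst hz)⟩

lemma TriangleFreeColorableOn.mono (hkm : k ≤ m) (h : G.TriangleFreeColorableOn s k) :
    G.TriangleFreeColorableOn s m := by
  obtain ⟨c, hlt, hc⟩ := h
  exact ⟨c, fun v hv => (hlt v hv).trans_le hkm, hc⟩

lemma triangleFreeColorableOn_card (G : SimpleGraph β) (s : Finset β) :
    G.TriangleFreeColorableOn s #s := by
  classical
  refine ⟨fun v => if hv : v ∈ s then s.equivFin ⟨v, hv⟩ else 0, fun v hv => by simp [hv],
    fun x hx y hy _ _ hxy _ _ hcxy _ => hxy.ne ?_⟩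
  simpa [hx, hy, Fin.val_inj] using hcxy

lemma triangleFreeChromOn_le (h : G.TriangleFreeColorableOn s k) : G.triangleFreeChromOn s ≤ k :=
  Nat.sInf_le h

lemma triangleFreeColorableOn_triangleFreeChromOn (G : SimpleGraph β) (s : Finset β) :
    G.TriangleFreeColorableOn s (G.triangleFreeChromOn s) :=
  Nat.sInf_mem (s := {k | G.TriangleFreeColorableOn s k}) ⟨_, triangleFreeColorableOn_card G s⟩

lemma triangleFreeChromOn_mono (hst : s ⊆ t) : G.triangleFreeChromOn s ≤ G.triangleFreeChromOn t :=
  triangleFreeChromOn_le ((triangleFreeColorableOn_triangleFreeChromOn G t).subset hst)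

lemma TriangleFreeColorableOn.of_erase [DecidableEq β] [DecidableRel G.Adj] {v : β}
    (h : G.TriangleFreeColorableOn (s.erase v) m) (hdeg : #{x ∈ s | G.Adj v x} < 2 * m) :
    G.TriangleFreeColorableOn s m := by
  obtain ⟨c, hlt, hc⟩ := h
  obtain ⟨i, hi, hfiber⟩ := exists_card_fiber_lt_of_card_lt_mul (f := c) (t := range m)
    (by rwa [card_range, mul_comm])
  have hunique : ∀ x ∈ s, G.Adj v x → c x = i → ∀ y ∈ s, G.Adj v y → c y = i → x = y :=
    fun x hx hvx hcx y hy hvy hcy => card_le_one.mp (Nat.lt_succ_iff.mp hfiber) x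
      (by simp [hx, hvx, hcx]) y (by simp [hy, hvy, hcy])
  refine ⟨Function.update c v i, fun x hx => ?_, fun x hx y hy z hz hxy hxz hyz => ?_⟩
  · rcases eq_or_ne x v with rfl | hxv
    · simpa using hi
    · simpa [hxv] using hlt x (mem_erase.mpr ⟨hxv, hx⟩)
  · intro hcxy hcxz
    rcases eq_or_ne x v with rfl | hxv
    · simp only [Function.update_self, Function.update_of_ne hxy.ne.symm,
        Function.update_of_ne hxz.ne.symm] at hcxy hcxz
      exact hyz.ne (hunique y hy hxy hcxy.symm z hz hxz hcxz.symm)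
    rcases eq_or_ne y v with rfl | hyv
    · simp only [Function.update_self, Function.update_of_ne hxv,
        Function.update_of_ne hyz.ne.symm] at hcxy hcxz
      exact hxz.ne (hunique x hx hxy.symm hcxy z hz hyz (hcxz ▸ hcxy))
    rcases eq_or_ne z v with rfl | hzv
    · simp only [Function.update_self, Function.update_of_ne hxv,
        Function.update_of_ne hyv] at hcxy hcxz
      exact hxy.ne (hunique x hx hxz.symm hcxz y hy hyz.symm (hcxy ▸ hcxz))
    simp only [Function.update_of_ne hxv, Function.update_of_ne hyv,
      Function.update_of_ne hzv] at hcxy hcxz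
    exact hc x (mem_erase.2 ⟨hxv, hx⟩) y (mem_erase.2 ⟨hyv, hy⟩) z (mem_erase.2 ⟨hzv, hz⟩)
      hxy hxz hyz hcxy hcxz

variable [DecidableEq β]

variable (G) in
def IsTriangleFreeCriticalOn (t : Finset β) : Prop :=
  ∀ v ∈ t, G.triangleFreeChromOn (t.erase v) < G.triangleFreeChromOn t

lemma exists_subset_isTriangleFreeCriticalOn (G : SimpleGraph β) (s : Finset β) :
    ∃ t ⊆ s, G.triangleFreeChromOn t = G.triangleFreeChromOn s ∧ G.IsTriangleFreeCriticalOn t := by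
  obtain ⟨t, ht, hmin⟩ := exists_min_image
    {t ∈ s.powerset | G.triangleFreeChromOn t = G.triangleFreeChromOn s} card
    ⟨s, by simp⟩
  rw [mem_filter, mem_powerset] at ht
  refine ⟨t, ht.1, ht.2, fun v hv => (triangleFreeChromOn_mono (erase_subset v t)).lt_of_ne
    fun heq => ?_⟩
  have hcard := hmin (t.erase v) (by simp [heq, ht.2, (erase_subset v t).trans ht.1])
  rw [card_erase_of_mem hv] at hcard
  have ht_pos := card_pos.mpr ⟨v, hv⟩
  omega

variable [DecidableRel G.Adj]

lemma two_mul_triangleFreeChromOn_le_card_filter_adj_add_two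
    (hcrit : G.IsTriangleFreeCriticalOn t) {v : β} (hv : v ∈ t) :
    2 * G.triangleFreeChromOn t ≤ #{x ∈ t | G.Adj v x} + 2 := by
  by_contra! hdeg
  have hcol : G.TriangleFreeColorableOn t (G.triangleFreeChromOn t - 1) :=
    ((triangleFreeColorableOn_triangleFreeChromOn G _).mono
      (Nat.le_sub_one_of_lt (hcrit v hv))).of_erase (by omega)
  have hle := triangleFreeChromOn_le hcol
  omega

lemma two_mul_triangleFreeChromOn_le_card_add_one (hcrit : G.IsTriangleFreeCriticalOn t) :
    2 * G.triangleFreeChromOn t ≤ #t + 1 := by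
  obtain rfl | ⟨v, hv⟩ := t.eq_empty_or_nonempty
  · have h₀ : G.triangleFreeChromOn ∅ ≤ 0 :=
      triangleFreeChromOn_le (triangleFreeColorableOn_card G ∅)
    omega
  have hsub : {x ∈ t | G.Adj v x} ⊆ t.erase v :=
    fun x hx => by simp only [mem_filter] at hx; exact mem_erase.2 ⟨hx.2.ne.symm, hx.1⟩
  have hcard := card_le_card hsub
  rw [card_erase_of_mem hv] at hcard
  have hdeg := two_mul_triangleFreeChromOn_le_card_filter_adj_add_two hcrit hv
  have ht_pos := card_pos.mpr ⟨v, hv⟩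
  omega

lemma two_mul_triangleFreeChromOn_add_compl_le (s : Finset β) :
    2 * (G.triangleFreeChromOn s + Gᶜ.triangleFreeChromOn s) ≤ #s + 3 := by
  obtain ⟨t₁, ht₁s, ht₁, hcrit₁⟩ := exists_subset_isTriangleFreeCriticalOn G s
  obtain ⟨t₂, ht₂s, ht₂, hcrit₂⟩ := exists_subset_isTriangleFreeCriticalOn Gᶜ s
  rw [← ht₁, ← ht₂]
  by_cases hdisj : Disjoint t₁ t₂
  · have hcard := card_le_card (union_subset ht₁s ht₂s)
    rw [card_union_of_disjoint hdisj] at hcard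
    have h₁ := two_mul_triangleFreeChromOn_le_card_add_one hcrit₁
    have h₂ := two_mul_triangleFreeChromOn_le_card_add_one hcrit₂
    omega
  obtain ⟨v, hv₁, hv₂⟩ := not_disjoint_iff.mp hdisj
  have hnbrs : Disjoint {x ∈ t₁ | G.Adj v x} {x ∈ t₂ | Gᶜ.Adj v x} :=
    disjoint_filter_filter' _ _ fun _ hG hGc x hx => ((compl_adj G v x).mp (hGc x hx)).2 (hG x hx)
  have hsub : {x ∈ t₁ | G.Adj v x} ∪ {x ∈ t₂ | Gᶜ.Adj v x} ⊆ s.erase v := by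
    intro x hx
    simp only [mem_union, mem_filter] at hx
    rcases hx with ⟨hx, hvx⟩ | ⟨hx, hvx⟩
    · exact mem_erase.2 ⟨hvx.ne.symm, ht₁s hx⟩
    · exact mem_erase.2 ⟨hvx.ne.symm, ht₂s hx⟩
  have hcard := card_le_card hsub
  rw [card_union_of_disjoint hnbrs, card_erase_of_mem (ht₁s hv₁)] at hcard
  have h₁ := two_mul_triangleFreeChromOn_le_card_filter_adj_add_two hcrit₁ hv₁
  have h₂ := two_mul_triangleFreeChromOn_le_card_filter_adj_add_two hcrit₂ hv₂
  have hs_pos := card_pos.mpr ⟨v, ht₁s hv₁⟩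
  omega

end SimpleGraph

lemma gFree_completeGraph_fin_three_induce_iff {β : Type*} (G : SimpleGraph β) (A : Set β) :
    GFree (completeGraph (Fin 3)) (G.induce A) ↔
      ∀ x ∈ A, ∀ y ∈ A, ∀ z ∈ A, G.Adj x y → G.Adj x z → G.Adj y z → False := by
  refine ⟨fun hfree x hx y hy z hz hxy hxz hyz => hfree ?_, ?_⟩
  · let f : Fin 3 → A := ![⟨x, hx⟩, ⟨y, hy⟩, ⟨z, hz⟩]
    have hf : ∀ i j, i ≠ j → G.Adj (f i) (f j) := by
      intro i j
      fin_cases i <;> fin_cases j <;> simp [f, hxy, hxz, hyz, hxy.symm, hxz.symm, hyz.symm]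
    refine ⟨⟨f, fun i j hij => ?_⟩, fun i j hij => hf i j hij⟩
    by_contra hne
    exact G.irrefl (hij ▸ hf i j hne)
  · rintro h ⟨f, hf⟩
    exact h _ (f 0).2 _ (f 1).2 _ (f 2).2 (hf 0 1 (by decide)) (hf 0 2 (by decide))
      (hf 1 2 (by decide))

lemma gChrom_completeGraph_fin_three {β : Type*} [Fintype β] (G : SimpleGraph β) :
    gChrom (completeGraph (Fin 3)) G = G.triangleFreeChromOn univ := by
  unfold gChrom triangleFreeChromOn
  congr 1
  ext k
  simp only [Set.mem_ofPred_eq, TriangleFreeColorableOn, gFree_completeGraph_fin_three_induce_iff,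
    mem_univ, forall_const]
  constructor
  · rintro ⟨c, hc⟩
    exact ⟨fun v => c v, fun v => (c v).2, fun x y z hxy hxz hyz hcxy hcxz =>
      hc (c x) x rfl y (Fin.val_injective hcxy).symm z (Fin.val_injective hcxz).symm hxy hxz hyz⟩
  · rintro ⟨c, hlt, hc⟩
    exact ⟨fun v => ⟨c v, hlt v⟩, fun i x hx y hy z hz hxy hxz hyz =>
      hc x y z hxy hxz hyz (congrArg Fin.val (hx.trans hy.symm))
        (congrArg Fin.val (hx.trans hz.symm))⟩

theorem stmt16 {β : Type*} [Fintype β] (H : SimpleGraph β) (n : ℕ)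
    (hn : Fintype.card β = n) :
    gChrom (completeGraph (Fin 3)) H + gChrom (completeGraph (Fin 3)) Hᶜ ≤
      ⌈((n : ℚ) / 2)⌉₊ + 1 := by
  classical
  have hceil : n ≤ 2 * ⌈((n : ℚ) / 2)⌉₊ := by
    have := Nat.le_ceil ((n : ℚ) / 2)
    exact_mod_cast (by linarith : (n : ℚ) ≤ 2 * ⌈((n : ℚ) / 2)⌉₊)
  have hsum := H.two_mul_triangleFreeChromOn_add_compl_le univ
  rw [card_univ, hn] at hsum
  rw [gChrom_completeGraph_fin_three, gChrom_completeGraph_fin_three]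
  omega
end

section
/- For any m ≥ 4 and any graph H on n vertices, χ_{C_m}(H) + χ_{C_m}(complement of H) ≤ ⌈n/2⌉ + 1. -/
open SimpleGraph

/-!
Let `d(G)` be the degeneracy of `G`, the largest minimum degree of an induced subgraph. Colouring
greedily along a degeneracy order, a new vertex has at most `d(G)` earlier neighbours, so among
`⌊d(G)/2⌋ + 1` colours one contains at most one of them. A vertex with a single neighbour in a
class lies on no cycle there (nor on a copy of any graph of minimum degree at least two), so
`χ_{C_m}(G) ≤ ⌊d(G)/2⌋ + 1`. Finally `d(H) + d(Hᶜ) ≤ n - 1`: a vertex common to the two extremal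
induced subgraphs has `H`- and `Hᶜ`-degree summing to `n - 1`, and if they are disjoint their
sizes, which exceed `d(H)` and `d(Hᶜ)`, sum to at most `n`.
-/

open Finset

theorem cycleGraph_neighborSet_nontrivial {m : ℕ} (v : Fin (m + 3)) :
    ((cycleGraph (m + 3)).neighborSet v).Nontrivial := by
  rw [cycleGraph_neighborSet]
  refine Set.nontrivial_pair fun h => ?_
  simp only [sub_eq_iff_eq_add, add_assoc v, left_eq_add] at h
  exact absurd h (ne_of_beq_false rfl)

theorem gChrom_eq_zero_of_isEmpty {α β : Type*} [IsEmpty β] (F : SimpleGraph α)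
    (G : SimpleGraph β) : gChrom F G = 0 :=
  Nat.sInf_eq_zero.mpr (Or.inl ⟨isEmptyElim, fun i => i.elim0⟩)

theorem GFree.induce_insert {α β : Type*} {F : SimpleGraph α} {G : SimpleGraph β} {A : Set β}
    {x : β} (hF : ∀ a, (F.neighborSet a).Nontrivial) (hA : GFree F (G.induce A))
    (hx : (A ∩ G.neighborSet x).Subsingleton) : GFree F (G.induce (insert x A)) := by
  rintro ⟨f, hf⟩
  by_cases hfx : ∃ a, (f a : β) = x
  · obtain ⟨a, ha⟩ := hfx
    have mem : ∀ b, F.Adj a b → (f b : β) ∈ A ∩ G.neighborSet x := fun b hb =>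
      ⟨(f b).2.resolve_left fun h => hb.ne (f.injective (Subtype.ext (ha.trans h.symm))),
        by have h : G.Adj (f a) (f b) := hf a b hb; rwa [ha] at h⟩
    obtain ⟨b, hb, c, hc, hbc⟩ := hF a
    exact hbc (f.injective (Subtype.ext (hx (mem b hb) (mem c hc))))
  · simp only [not_exists] at hfx
    exact hA ⟨⟨fun a => ⟨f a, (f a).2.resolve_left (hfx a)⟩,
      fun a b h => f.injective (Subtype.ext (Subtype.mk.inj h))⟩, hf⟩

namespace SimpleGraph

variable {β : Type*} (G : SimpleGraph β) [DecidableRel G.Adj]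

def minDegreeOn (S : Finset β) : ℕ :=
  if h : S.Nonempty then S.inf' h fun x => #{y ∈ S | G.Adj x y} else 0

theorem minDegreeOn_le {S : Finset β} {x : β} (hx : x ∈ S) :
    G.minDegreeOn S ≤ #{y ∈ S | G.Adj x y} := by
  rw [minDegreeOn, dif_pos ⟨x, hx⟩]
  exact inf'_le _ hx

theorem exists_card_filter_adj_eq_minDegreeOn {S : Finset β} (hS : S.Nonempty) :
    ∃ x ∈ S, #{y ∈ S | G.Adj x y} = G.minDegreeOn S := by
  obtain ⟨x, hx, h⟩ := exists_mem_eq_inf' hS fun x => #{y ∈ S | G.Adj x y}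
  exact ⟨x, hx, by rw [minDegreeOn, dif_pos hS, h]⟩

theorem card_filter_adj_lt {S : Finset β} {x : β} (hx : x ∈ S) : #{y ∈ S | G.Adj x y} < #S :=
  card_lt_card (filter_ssubset.mpr ⟨x, hx, G.irrefl⟩)

variable [Fintype β]

theorem card_filter_adj_le_degree (S : Finset β) (x : β) : #{y ∈ S | G.Adj x y} ≤ G.degree x :=
  card_le_card fun y hy => (mem_neighborFinset G x y).mpr (mem_filter.mp hy).2

noncomputable def degeneracy : ℕ :=
  univ.sup G.minDegreeOn

theorem exists_card_filter_adj_le_degeneracy {S : Finset β} (hS : S.Nonempty) :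
    ∃ x ∈ S, #{y ∈ S | G.Adj x y} ≤ G.degeneracy := by
  obtain ⟨x, hx, h⟩ := G.exists_card_filter_adj_eq_minDegreeOn hS
  exact ⟨x, hx, h ▸ le_sup (mem_univ S)⟩

theorem exists_degeneracy_le_card_filter_adj [Nonempty β] :
    ∃ S : Finset β, S.Nonempty ∧ ∀ x ∈ S, G.degeneracy ≤ #{y ∈ S | G.Adj x y} := by
  obtain ⟨S, -, hS⟩ := exists_mem_eq_sup univ univ_nonempty G.minDegreeOn
  rcases S.eq_empty_or_nonempty with rfl | hne
  · refine ⟨{Classical.arbitrary β}, singleton_nonempty _, fun x _ => ?_⟩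
    simp [degeneracy, hS, minDegreeOn]
  · exact ⟨S, hne, fun x hx => hS.trans_le (G.minDegreeOn_le hx)⟩

theorem degeneracy_add_degeneracy_compl_lt_card [DecidableEq β] [Nonempty β] :
    G.degeneracy + Gᶜ.degeneracy < Fintype.card β := by
  obtain ⟨S, ⟨x, hx⟩, hS⟩ := G.exists_degeneracy_le_card_filter_adj
  obtain ⟨T, ⟨y, hy⟩, hT⟩ := Gᶜ.exists_degeneracy_le_card_filter_adj
  by_cases hST : Disjoint S T
  · have hSx := (hS x hx).trans_lt (G.card_filter_adj_lt hx)
    have hTy := (hT y hy).trans_lt (Gᶜ.card_filter_adj_lt hy)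
    have hcard := card_union_of_disjoint hST ▸ card_le_univ (S ∪ T)
    omega
  · obtain ⟨z, hzS, hzT⟩ := not_disjoint_iff.mp hST
    have hSz := (hS z hzS).trans (G.card_filter_adj_le_degree S z)
    have hTz := (hT z hzT).trans (Gᶜ.card_filter_adj_le_degree T z)
    have hcompl := G.degree_compl (v := z)
    have hlt := G.degree_lt_card_verts z
    omega

end SimpleGraph

section Greedy

variable {α β : Type*} {F : SimpleGraph α} [Nonempty α]
  (G : SimpleGraph β) [Fintype β] [DecidableEq β] [DecidableRel G.Adj]

theorem exists_coloring_gFree_on (hF : ∀ a, (F.neighborSet a).Nontrivial) (S : Finset β) :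
    ∃ c : β → Fin (G.degeneracy / 2 + 1), ∀ i, GFree F (G.induce {v | v ∈ S ∧ c v = i}) := by
  induction S using Finset.strongInduction with | H S ih =>
  rcases S.eq_empty_or_nonempty with rfl | hS
  · exact ⟨0, fun i ⟨f, _⟩ => by simpa using (f (Classical.arbitrary α)).2⟩
  obtain ⟨x, hxS, hx⟩ := G.exists_card_filter_adj_le_degeneracy hS
  obtain ⟨c, hc⟩ := ih (S.erase x) (erase_ssubset hxS)
  have hfew :
      #{y ∈ S.erase x | G.Adj x y} < #(univ : Finset (Fin (G.degeneracy / 2 + 1))) * 2 := by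
    have : #{y ∈ S.erase x | G.Adj x y} ≤ #{y ∈ S | G.Adj x y} :=
      card_le_card (filter_subset_filter _ (erase_subset x S))
    simp only [card_univ, Fintype.card_fin]
    omega
  obtain ⟨i₀, -, hi₀⟩ := exists_card_fiber_lt_of_card_lt_mul (f := c) hfew
  refine ⟨Function.update c x i₀, fun i => ?_⟩
  rcases eq_or_ne i i₀ with rfl | hi
  · have hset : {v | v ∈ S ∧ Function.update c x i v = i} =
        insert x {v | v ∈ S.erase x ∧ c v = i} := by
      ext v
      by_cases hv : v = x <;> simp [hv, hxS]
    rw [hset]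
    refine (hc i).induce_insert hF fun y₁ h₁ y₂ h₂ =>
      card_le_one.mp (Nat.lt_succ_iff.mp hi₀)
        y₁ (mem_filter.mpr ⟨mem_filter.mpr ⟨h₁.1.1, h₁.2⟩, h₁.1.2⟩)
        y₂ (mem_filter.mpr ⟨mem_filter.mpr ⟨h₂.1.1, h₂.2⟩, h₂.1.2⟩)
  · have hset : {v | v ∈ S ∧ Function.update c x i₀ v = i} =
        {v | v ∈ S.erase x ∧ c v = i} := by
      ext v
      by_cases hv : v = x <;> simp [hv, hi.symm]
    rw [hset]
    exact hc i

theorem gChrom_le_degeneracy (hF : ∀ a, (F.neighborSet a).Nontrivial) :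
    gChrom F G ≤ G.degeneracy / 2 + 1 := by
  obtain ⟨c, hc⟩ := exists_coloring_gFree_on G hF univ
  have hset (i) : {v | v ∈ univ ∧ c v = i} = {v | c v = i} := by simp
  exact Nat.sInf_le ⟨c, fun i => hset i ▸ hc i⟩

end Greedy

theorem stmt17 {β : Type*} [Fintype β] (m : ℕ) (hm : 4 ≤ m) (H : SimpleGraph β) (n : ℕ)
    (hn : Fintype.card β = n) :
    gChrom (cycleGraph m) H + gChrom (cycleGraph m) Hᶜ ≤ ⌈((n : ℚ) / 2)⌉₊ + 1 := by
  classical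
  obtain ⟨k, rfl⟩ : ∃ k, m = k + 3 := ⟨m - 3, by omega⟩
  cases isEmpty_or_nonempty β with
  | inl _ => simp [gChrom_eq_zero_of_isEmpty]
  | inr _ =>
    have hH := gChrom_le_degeneracy (F := cycleGraph (k + 3)) H cycleGraph_neighborSet_nontrivial
    have hHc := gChrom_le_degeneracy (F := cycleGraph (k + 3)) Hᶜ cycleGraph_neighborSet_nontrivial
    have hsum := H.degeneracy_add_degeneracy_compl_lt_card
    have hceil : (n : ℚ) ≤ 2 * ⌈(n : ℚ) / 2⌉₊ := by linarith [Nat.le_ceil ((n : ℚ) / 2)]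
    have hceil' : n ≤ 2 * ⌈(n : ℚ) / 2⌉₊ := by exact_mod_cast hceil
    omega
end

section
/- For H = K_3 + 3K_1 (the join of a triangle with three isolated vertices, a graph on 6 vertices whose complement, restricted to its nontrivial part, is a triangle), we have χ_{K_3}(H) + χ_{K_3}(complement of H) = 4 = ⌈6/2⌉ + 1. -/
open SimpleGraph

instance : DecidableRel (cliqueJoinEmpty 3 3).Adj := fun a b =>
  decidable_of_iff _ (SimpleGraph.fromRel_adj _ a b).symm

instance instIndDec {β : Type*} (G : SimpleGraph β) [DecidableRel G.Adj] (s : Set β) :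
    DecidableRel (G.induce s).Adj := fun a b =>
  inferInstanceAs (Decidable (G.Adj a.1 b.1))

lemma containsCopy_K3_iff {β : Type*} (H : SimpleGraph β) :
    ContainsCopy (completeGraph (Fin 3)) H ↔
      ∃ a b c : β, H.Adj a b ∧ H.Adj a c ∧ H.Adj b c := by
  constructor
  · rintro ⟨f, hf⟩
    exact ⟨f 0, f 1, f 2, hf 0 1 (by decide : (0:Fin 3) ≠ 1), hf 0 2 (by decide : (0:Fin 3) ≠ 2), hf 1 2 (by decide : (1:Fin 3) ≠ 2)⟩
  · rintro ⟨a, b, c, hab, hac, hbc⟩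
    refine ⟨⟨![a,b,c], ?_⟩, ?_⟩
    · intro i j hij
      fin_cases i <;> fin_cases j <;>
        simp_all <;> first
          | rfl
          | exact absurd hij hab.ne
          | exact absurd hij hac.ne
          | exact absurd hij hbc.ne
          | exact absurd hij.symm hab.ne
          | exact absurd hij.symm hac.ne
          | exact absurd hij.symm hbc.ne
    · intro i j hij
      fin_cases i <;> fin_cases j <;> simp_all <;> first
        | exact hab | exact hac | exact hbc
        | exact hab.symm | exact hac.symm | exact hbc.symm

example : True := trivial

lemma gChrom_two {β : Type*} [Fintype β] [DecidableEq β] (H : SimpleGraph β)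
    [DecidableRel H.Adj] (v₀ : β)
    (c : β → Fin 2)
    (hfree : ∀ i, ¬ ∃ a b c' : ↥{v | c v = i}, (H.induce {v | c v = i}).Adj a b ∧
      (H.induce {v | c v = i}).Adj a c' ∧ (H.induce {v | c v = i}).Adj b c')
    (htri : ∃ a b c' : β, H.Adj a b ∧ H.Adj a c' ∧ H.Adj b c') :
    gChrom (completeGraph (Fin 3)) H = 2 := by
  have h2 : 2 ∈ {k | ∃ c : β → Fin k, ∀ i, GFree (completeGraph (Fin 3)) (H.induce {v | c v = i})} := by
    refine ⟨c, fun i => ?_⟩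
    rw [GFree, containsCopy_K3_iff]
    exact hfree i
  refine le_antisymm (Nat.sInf_le h2) (le_csInf ⟨2, h2⟩ ?_)
  rintro k ⟨c', hc'⟩
  match k with
  | 0 => exact (c' v₀).elim0
  | 1 =>
    exfalso
    apply hc' 0
    rw [containsCopy_K3_iff]
    obtain ⟨a, b, d, hab, had, hbd⟩ := htri
    exact ⟨⟨a, Subsingleton.elim _ _⟩, ⟨b, Subsingleton.elim _ _⟩, ⟨d, Subsingleton.elim _ _⟩,
      hab, had, hbd⟩
  | (n+2) => omega

lemma gChrom_H : gChrom (completeGraph (Fin 3)) (cliqueJoinEmpty 3 3) = 2 := by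
  apply gChrom_two _ (Sum.inl 0)
    (fun v => if v = Sum.inl 0 ∨ v = Sum.inl 1 then 0 else 1)
  · intro i; fin_cases i <;> decide
  · exact ⟨Sum.inl 0, Sum.inl 1, Sum.inl 2, by decide, by decide, by decide⟩

lemma gChrom_Hc : gChrom (completeGraph (Fin 3)) (cliqueJoinEmpty 3 3)ᶜ = 2 := by
  apply gChrom_two _ (Sum.inl 0)
    (fun v => if v = Sum.inr 2 then 1 else 0)
  · intro i; fin_cases i <;> decide
  · exact ⟨Sum.inr 0, Sum.inr 1, Sum.inr 2, by decide, by decide, by decide⟩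

theorem stmt18 :
    gChrom (completeGraph (Fin 3)) (cliqueJoinEmpty 3 3) +
      gChrom (completeGraph (Fin 3)) (cliqueJoinEmpty 3 3)ᶜ = 4 ∧
    (4 : ℕ) = ⌈((6 : ℚ) / 2)⌉₊ + 1 := by
  rw [gChrom_H, gChrom_Hc]
  norm_num
end

section
/- For any graph H on n vertices, the vertex arboricity satisfies a(H) + a(complement of H) ≤ (n+3)/2, where a(H) is the minimum number of classes in a vertex partition such that each class induces a forest. -/
open SimpleGraph

/-- The vertex arboricity of `H`: the least number of classes in a vertex partition
such that each class induces a forest. -/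
noncomputable def vertexArboricity {β : Type*} (H : SimpleGraph β) : ℕ :=
  sInf {k | ∃ c : β → Fin k, ∀ i, (H.induce {v | c v = i}).IsAcyclic}

/-!
If `H` is `d`-degenerate, colour its vertices one at a time in a degeneracy order with
`⌊d/2⌋ + 1` colours: each new vertex has at most `d` earlier neighbours, so some colour occurs at
most once among them, and giving the vertex that colour closes no cycle. Hence
`a(H) ≤ ⌊d/2⌋ + 1`. For the least such `d`, some vertex set `S` has all inner degrees `≥ d`;
every vertex of `S` then has at most `n - 1 - d` non-neighbours and every set disjoint from `S`
has fewer than `n - d` vertices, so `Hᶜ` is `(n - 1 - d)`-degenerate. Adding the two bounds gives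
`2 (a(H) + a(Hᶜ)) ≤ d + (n - 1 - d) + 4 = n + 3`.
-/

open Finset

namespace SimpleGraph

variable {V : Type*} {G : SimpleGraph V}

theorem isAcyclic_induce_iff {s : Set V} :
    (G.induce s).IsAcyclic ↔ ∀ ⦃u⦄ (c : G.Walk u u), c.IsCycle → ¬ ∀ x ∈ c.support, x ∈ s := by
  refine ⟨fun h u c hc hs => h (c.induce s hs) ?_, fun h u c hc => ?_⟩
  · exact (Walk.isCycle_map_iff_of_injective (Embedding.induce (G := G) s).injective).1
      ((c.map_induce hs).symm ▸ hc)
  · refine h (c.map (Embedding.induce s).toHom) (hc.map (Embedding.induce (G := G) s).injective) ?_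
    simp only [Walk.support_map, List.mem_map]
    rintro _ ⟨x, -, rfl⟩
    exact x.2

theorem isAcyclic_induce_insert {s : Set V} {v : V} (hs : (G.induce s).IsAcyclic)
    (hv : (G.neighborSet v ∩ s).Subsingleton) : (G.induce (insert v s)).IsAcyclic := by
  rw [isAcyclic_induce_iff] at hs ⊢
  intro u c hc hcs
  by_cases hvc : v ∈ c.support
  · classical
    set p := c.rotate v hvc
    have hp : p.IsCycle := hc.rotate hvc
    have hps : ∀ x ∈ p.support, x ∈ insert v s := fun x hx =>
      hcs x ((c.mem_support_rotate_iff v hvc).1 hx)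
    have hmem : ∀ {x}, G.Adj v x → x ∈ p.support → x ∈ G.neighborSet v ∩ s := fun hx hxp =>
      ⟨hx, (hps _ hxp).resolve_left hx.ne'⟩
    exact hp.snd_ne_penultimate <| hv
      (hmem (p.adj_snd hp.not_nil) (p.getVert_mem_support 1))
      (hmem (p.adj_penultimate hp.not_nil).symm (p.getVert_mem_support _))
  · exact hs c hc fun x hx => (hcs x hx).resolve_left (ne_of_mem_of_not_mem hx hvc)


section Degenerate

variable [DecidableRel G.Adj]

def IsDegenerate (G : SimpleGraph V) [DecidableRel G.Adj] (d : ℕ) : Prop :=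
  ∀ s : Finset V, s.Nonempty → ∃ v ∈ s, #{w ∈ s | G.Adj v w} ≤ d

theorem card_filter_adj_lt_s19 {s : Finset V} {v : V} (hv : v ∈ s) : #{w ∈ s | G.Adj v w} < #s :=
  card_lt_card (filter_ssubset.2 ⟨v, hv, G.irrefl⟩)

theorem card_filter_adj_le_degree_s19 [Fintype V] (s : Finset V) (v : V) :
    #{w ∈ s | G.Adj v w} ≤ G.degree v :=
  card_le_card fun w hw => (G.mem_neighborFinset v w).2 (mem_filter.1 hw).2

variable (G) in
theorem isDegenerate_card_sub_one [Fintype V] : G.IsDegenerate (Fintype.card V - 1) := by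
  rintro s ⟨v, hv⟩
  have := card_filter_adj_lt_s19 (G := G) hv
  have := card_le_univ s
  exact ⟨v, hv, by omega⟩

theorem isDegenerate_compl_of_not_isDegenerate [Fintype V] [DecidableEq V] {d : ℕ}
    (h : ¬ G.IsDegenerate d) : Gᶜ.IsDegenerate (Fintype.card V - 2 - d) := by
  simp only [IsDegenerate, not_forall, not_exists, not_and, not_le] at h
  obtain ⟨S, hSne, hS⟩ := h
  rintro T ⟨u, hu⟩
  by_cases hST : ∃ v ∈ S, v ∈ T
  · obtain ⟨v, hvS, hvT⟩ := hST
    refine ⟨v, hvT, ?_⟩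
    have hvT := card_filter_adj_le_degree_s19 (G := Gᶜ) T v
    have hdeg := (hS v hvS).trans_le (card_filter_adj_le_degree_s19 S v)
    rw [degree_compl] at hvT
    omega
  · simp only [not_exists, not_and] at hST
    obtain ⟨v, hv⟩ := hSne
    have hSbig := (hS v hv).trans (card_filter_adj_lt_s19 hv)
    have huT := card_filter_adj_lt_s19 (G := Gᶜ) hu
    have hcard : #S + #T ≤ Fintype.card V := by
      rw [← card_union_of_disjoint (Finset.disjoint_left.2 hST)]
      exact card_le_univ _
    exact ⟨u, hu, by omega⟩

theorem exists_isDegenerate_and_compl [Fintype V] [DecidableEq V] :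
    ∃ d ≤ Fintype.card V - 1, G.IsDegenerate d ∧ Gᶜ.IsDegenerate (Fintype.card V - 1 - d) := by
  classical
  have h : ∃ d, G.IsDegenerate d := ⟨_, isDegenerate_card_sub_one G⟩
  refine ⟨Nat.find h, Nat.find_min' h (isDegenerate_card_sub_one G), Nat.find_spec h, ?_⟩
  rcases Nat.eq_zero_or_pos (Nat.find h) with h0 | hpos
  · simpa [h0] using isDegenerate_card_sub_one Gᶜ
  · have := isDegenerate_compl_of_not_isDegenerate (Nat.find_min h (Nat.sub_one_lt hpos.ne'))
    rwa [show Fintype.card V - 2 - (Nat.find h - 1) = Fintype.card V - 1 - Nat.find h by omega]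
      at this

theorem IsDegenerate.exists_isAcyclic_coloring {d k : ℕ} (hG : G.IsDegenerate d)
    (hk : d < 2 * k) (s : Finset V) :
    ∃ c : V → Fin k, ∀ i, (G.induce {v | v ∈ s ∧ c v = i}).IsAcyclic := by
  classical
  induction s using Finset.strongInduction with | H s ih =>
  rcases s.eq_empty_or_nonempty with rfl | hs
  · exact ⟨fun _ => ⟨0, by omega⟩, fun i v => absurd v.2.1 (notMem_empty _)⟩
  obtain ⟨v, hv, hdeg⟩ := hG s hs
  obtain ⟨c, hc⟩ := ih _ (erase_ssubset hv)
  obtain ⟨i, -, hi⟩ := exists_card_fiber_lt_of_card_lt_mul (s := {w ∈ s | G.Adj v w})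
    (t := univ) (f := c) (n := 2) (by rw [card_univ, Fintype.card_fin]; omega)
  refine ⟨Function.update c v i, fun j => ?_⟩
  by_cases hj : j = i
  · subst hj
    have hsub : {w | w ∈ s ∧ Function.update c v j w = j} ⊆
        insert v {w | w ∈ s.erase v ∧ c w = j} := by
      rintro w ⟨hws, hwj⟩
      by_cases hwv : w = v
      · exact Or.inl hwv
      · exact Or.inr ⟨mem_erase.2 ⟨hwv, hws⟩, by rwa [Function.update_of_ne hwv] at hwj⟩
    refine (isAcyclic_induce_insert (hc j) ?_).embedding (G.induceHomOfLE hsub)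
    rintro x ⟨hvx, hxs, hxj⟩ y ⟨hvy, hys, hyj⟩
    exact card_le_one.1 (Nat.lt_succ_iff.1 hi)
      x (mem_filter.2 ⟨mem_filter.2 ⟨mem_of_mem_erase hxs, hvx⟩, hxj⟩)
      y (mem_filter.2 ⟨mem_filter.2 ⟨mem_of_mem_erase hys, hvy⟩, hyj⟩)
  · have hsub : {w | w ∈ s ∧ Function.update c v i w = j} ⊆ {w | w ∈ s.erase v ∧ c w = j} := by
      rintro w ⟨hws, hwj⟩
      have hwv : w ≠ v := by rintro rfl; rw [Function.update_self] at hwj; exact hj hwj.symm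
      exact ⟨mem_erase.2 ⟨hwv, hws⟩, by rwa [Function.update_of_ne hwv] at hwj⟩
    exact (hc j).embedding (G.induceHomOfLE hsub)

theorem IsDegenerate.vertexArboricity_le [Fintype V] {d : ℕ} (hG : G.IsDegenerate d) :
    vertexArboricity G ≤ d / 2 + 1 := by
  obtain ⟨c, hc⟩ := hG.exists_isAcyclic_coloring (k := d / 2 + 1) (by omega) univ
  exact Nat.sInf_le ⟨c, fun i => by
    rw [show {v | c v = i} = {v | v ∈ univ ∧ c v = i} by simp]; exact hc i⟩

end Degenerate

end SimpleGraph

theorem vertexArboricity_eq_zero {V : Type*} [IsEmpty V] (G : SimpleGraph V) :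
    vertexArboricity G = 0 :=
  Nat.eq_zero_of_le_zero (Nat.sInf_le ⟨isEmptyElim, fun i => i.elim0⟩)

theorem stmt19 {β : Type*} [Fintype β] (H : SimpleGraph β) (n : ℕ)
    (hn : Fintype.card β = n) :
    2 * (vertexArboricity H + vertexArboricity Hᶜ) ≤ n + 3 := by
  classical
  subst hn
  rcases isEmpty_or_nonempty β with hβ | hβ
  · simp [vertexArboricity_eq_zero]
  obtain ⟨d, hd, hH, hHc⟩ := H.exists_isDegenerate_and_compl
  have := hH.vertexArboricity_le
  have := hHc.vertexArboricity_le
  have := Fintype.card_pos (α := β)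
  omega
end
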